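/- The projector M₃,₁ = (Σ_{k=1}^{d−1}|k⟩⟨k|_E) ⊗ |0⟩⟨0|_{e₁} ⊗ |0⟩⟨0|_{e₂}, tensored with the identity on all other factors, acts as the identity on every post-measurement state arising from a state of H₄, and annihilates every post-measurement state arising from a state of any other subset H_k, k ≠ 4, of set (5). (Step 2 of the proof of Theorem 10: Eve's first measurement exactly isolates the subset H₄.) -/

import Mathlib

noncomputable section

/-- View a coefficient function as a vector of the Euclidean (Hilbert) space. -/
def ofFun {ι : Type*} [Fintype ι] (f : ι → ℂ) : EuclideanSpace ℂ ι := WithLp.toLp 2 f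

/-- Transport an endomorphism of the coefficient functions to the Euclidean space. -/
def toE {ι : Type*} [Fintype ι] (T : (ι → ℂ) →ₗ[ℂ] (ι → ℂ)) :
    Module.End ℂ (EuclideanSpace ℂ ι) :=
  (WithLp.linearEquiv 2 ℂ (ι → ℂ)).symm.toLinearMap ∘ₗ T ∘ₗ
    (WithLp.linearEquiv 2 ℂ (ι → ℂ)).toLinearMap

open Classical in
/-- Diagonal orthogonal projection keeping exactly the basis vectors whose index
satisfies `f`. -/
def diagP {ι : Type*} [Fintype ι] (f : ι → Prop) : Module.End ℂ (EuclideanSpace ℂ ι) :=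
  toE (LinearMap.pi fun i => (if f i then (1 : ℂ) else 0) • LinearMap.proj i)

/-- Tensor product of two vectors, realized on the product index set. -/
def tensE {ι κ : Type*} [Fintype ι] [Fintype κ]
    (u : EuclideanSpace ℂ ι) (w : EuclideanSpace ℂ κ) : EuclideanSpace ℂ (ι × κ) :=
  ofFun fun p => u p.1 * w p.2

/-- The root of unity `ω_n = e^{2πi/n}`. -/
def omegaC (n : ℕ) : ℂ := Complex.exp (2 * Real.pi * Complex.I / n)

/-- Computational basis vector `|k⟩` of `ℂ^d`. -/
def ketD (d k : ℕ) : EuclideanSpace ℂ (Fin d) :=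
  ofFun fun u => if (u : ℕ) = k then 1 else 0

/-- The (unnormalized) vector `|α_i⟩ = Σ_{u=0}^{d−1} ω_d^{iu}|u⟩`. -/
def alphaD (d i : ℕ) : EuclideanSpace ℂ (Fin d) :=
  ofFun fun u => omegaC d ^ (i * (u : ℕ))

/-- The (unnormalized) vector `|γ_m⟩ = Σ_{u=0}^{d−2} ω_{d−1}^{mu}|u+1⟩`. -/
def gammaD (d m : ℕ) : EuclideanSpace ℂ (Fin d) :=
  ofFun fun u => if (u : ℕ) = 0 then 0 else omegaC (d - 1) ^ (m * ((u : ℕ) - 1))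

/-- Tensor product of five vectors of `ℂ^d`, realized on the index set `Fin 5 → Fin d`. -/
def tp5 {d : ℕ} (v0 v1 v2 v3 v4 : EuclideanSpace ℂ (Fin d)) :
    EuclideanSpace ℂ (Fin 5 → Fin d) :=
  ofFun fun x => v0 (x 0) * v1 (x 1) * v2 (x 2) * v3 (x 3) * v4 (x 4)

/-- The states of set (5): family `k : Fin 10` corresponds to `H_{k+1}`; the parameter
`a` is the spectral parameter (`i ∈ ℤ_d` for `H₁,…,H₅`, `m ∈ ℤ_{d−1}` for `H₆,…,H₁₀`),
and `p` is the index of the computational basis vector `|p⟩ ∈ {|1⟩,…,|d−1⟩}`. -/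
def stateOf (d : ℕ) (k : Fin 10) (a p : ℕ) : EuclideanSpace ℂ (Fin 5 → Fin d) :=
  if k = 0 then tp5 (alphaD d a) (alphaD d a) (ketD d p) (ketD d 0) (ketD d 0)
  else if k = 1 then tp5 (alphaD d a) (ketD d p) (ketD d 0) (ketD d 0) (alphaD d a)
  else if k = 2 then tp5 (ketD d p) (ketD d 0) (ketD d 0) (alphaD d a) (alphaD d a)
  else if k = 3 then tp5 (ketD d 0) (ketD d 0) (alphaD d a) (alphaD d a) (ketD d p)
  else if k = 4 then tp5 (ketD d 0) (alphaD d a) (alphaD d a) (ketD d p) (ketD d 0)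
  else if k = 5 then tp5 (gammaD d a) (ketD d 0) (ketD d p) (ketD d 0) (ketD d 1)
  else if k = 6 then tp5 (ketD d 0) (ketD d p) (ketD d 0) (ketD d 1) (gammaD d a)
  else if k = 7 then tp5 (ketD d p) (ketD d 0) (ketD d 1) (gammaD d a) (ketD d 0)
  else if k = 8 then tp5 (ketD d 0) (ketD d 1) (gammaD d a) (ketD d 0) (ketD d p)
  else tp5 (ketD d 1) (gammaD d a) (ketD d 0) (ketD d p) (ketD d 0)

/-- Ranges of the parameters of the states of set (5). -/
def validIdx (d : ℕ) (k : Fin 10) (a p : ℕ) : Prop :=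
  (if (k : ℕ) < 5 then a < d else a < d - 1) ∧ 1 ≤ p ∧ p < d

/-- The full Hilbert space: five `ℂ^d` subsystems `A,B,C,D,E` (positions `0,…,4`),
ancilla qubits `a,b` (first `Fin 2 → Fin 2` factor, attached to `A,B`), ancilla
qubits `c₁,c₂` (second factor, held by Charlie), `v₁,v₂` (third factor, held by
Dave), and `e₁,e₂` (fourth factor, held by Eve). -/
abbrev WF (d : ℕ) : Type :=
  EuclideanSpace ℂ
    ((Fin 5 → Fin d) ×
      ((Fin 2 → Fin 2) × (Fin 2 → Fin 2) × (Fin 2 → Fin 2) × (Fin 2 → Fin 2)))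

/-- The ancilla state `|F⟩_{ac₁v₁e₁} ⊗ |F⟩_{bc₂v₂e₂}`, where
`|F⟩ = (|0000⟩+|1111⟩)/√2`. -/
def ancF :
    EuclideanSpace ℂ
      ((Fin 2 → Fin 2) × (Fin 2 → Fin 2) × (Fin 2 → Fin 2) × (Fin 2 → Fin 2)) :=
  ofFun fun q =>
    ∏ k : Fin 2,
      (if q.1 k = q.2.1 k ∧ q.2.1 k = q.2.2.1 k ∧ q.2.2.1 k = q.2.2.2 k then
        (Real.sqrt 2 : ℂ)⁻¹ else 0)

/-- The measurement projector
`Q_{Xx} = |0⟩⟨0|_X ⊗ |0⟩⟨0|_x + (Σ_{k=1}^{d−1}|k⟩⟨k|_X) ⊗ |1⟩⟨1|_x`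
on the main subsystem at position `X` and its ancilla qubit at position `j`. -/
def QprojF (d : ℕ) (X : Fin 5) (j : Fin 2) : Module.End ℂ (WF d) :=
  diagP fun q => ((q.1 X : ℕ) = 0 ∧ q.2.1 j = 0) ∨ ((q.1 X : ℕ) ≠ 0 ∧ q.2.1 j = 1)

/-- The post-measurement state
`(Q_{Aa}Q_{Bb})(|h⟩ ⊗ |F⟩_{ac₁v₁e₁} ⊗ |F⟩_{bc₂v₂e₂})`. -/
def postF (d : ℕ) (h : EuclideanSpace ℂ (Fin 5 → Fin d)) : WF d :=
  (QprojF d 0 0 * QprojF d 1 1) (tensE h ancF)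

/-- Eve's projector
`M₃,₁ = (Σ_{k=1}^{d−1}|k⟩⟨k|_E) ⊗ |0⟩⟨0|_{e₁} ⊗ |0⟩⟨0|_{e₂}`. -/
def eveM31 (d : ℕ) : Module.End ℂ (WF d) :=
  diagP fun q => (q.1 4 : ℕ) ≠ 0 ∧ q.2.2.2.2 0 = 0 ∧ q.2.2.2.2 1 = 0


/-!
The ancilla state `|F⟩|F⟩` correlates Eve's qubits with the qubits attached to `A` and `B`:
`e₁ = a` and `e₂ = b` on its support, while `Q_{Aa}Q_{Bb}` forces `a = 0 ↔ A = 0` and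
`b = 0 ↔ B = 0`. Hence on a post-measurement state `M₃,₁` acts as the projection of the
underlying five-party state onto the configurations with `A = B = 0` and `E ≠ 0`. The states of
`H₄` are supported inside this set (`|0⟩|0⟩` on `A,B`, `|p⟩` with `p ≠ 0` on `E`); every other
family has `A ≠ 0`, `B ≠ 0` or `E = 0` on its whole support.
-/

open Classical in
theorem diagP_apply {ι : Type*} [Fintype ι] (f : ι → Prop) (v : EuclideanSpace ℂ ι) (i : ι) :
    diagP f v i = if f i then v i else 0 := by
  by_cases h : f i <;> simp [diagP, toE, h, WithLp.linearEquiv]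

theorem diagP_eq_self {ι : Type*} [Fintype ι] {f : ι → Prop} {v : EuclideanSpace ℂ ι}
    (hv : ∀ i, ¬ f i → v i = 0) : diagP f v = v := by
  ext i
  rw [diagP_apply]
  split_ifs with h
  exacts [rfl, (hv i h).symm]

theorem diagP_eq_zero {ι : Type*} [Fintype ι] {f : ι → Prop} {v : EuclideanSpace ℂ ι}
    (hv : ∀ i, f i → v i = 0) : diagP f v = 0 := by
  ext i
  rw [diagP_apply]
  split_ifs with h
  exacts [hv i h, rfl]

theorem fst_eq_of_ancF_ne_zero
    {q : (Fin 2 → Fin 2) × (Fin 2 → Fin 2) × (Fin 2 → Fin 2) × (Fin 2 → Fin 2)}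
    (hq : ancF q ≠ 0) (k : Fin 2) : q.1 k = q.2.2.2 k := by
  by_contra hne
  simp only [ancF, ofFun, WithLp.ofLp_toLp] at hq
  refine hq (Finset.prod_eq_zero (Finset.mem_univ k) (if_neg ?_))
  rintro ⟨h₁, h₂, h₃⟩
  exact hne (h₁.trans (h₂.trans h₃))

def EveBranch (d : ℕ) (x : Fin 5 → Fin d) : Prop :=
  (x 0 : ℕ) = 0 ∧ (x 1 : ℕ) = 0 ∧ (x 4 : ℕ) ≠ 0

theorem postF_apply (d : ℕ) (h : EuclideanSpace ℂ (Fin 5 → Fin d))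
    (q : (Fin 5 → Fin d) ×
      ((Fin 2 → Fin 2) × (Fin 2 → Fin 2) × (Fin 2 → Fin 2) × (Fin 2 → Fin 2))) :
    postF d h q =
      if (((q.1 0 : ℕ) = 0 ∧ q.2.1 0 = 0) ∨ ((q.1 0 : ℕ) ≠ 0 ∧ q.2.1 0 = 1)) ∧
          (((q.1 1 : ℕ) = 0 ∧ q.2.1 1 = 0) ∨ ((q.1 1 : ℕ) ≠ 0 ∧ q.2.1 1 = 1)) then
        h q.1 * ancF q.2
      else 0 := by
  rw [postF, Module.End.mul_apply, QprojF, QprojF, diagP_apply, diagP_apply]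
  split_ifs <;> first | rfl | tauto

theorem postF_zero (d : ℕ) : postF d 0 = 0 := by
  ext q
  simp [postF_apply]

theorem eveM31_postF (d : ℕ) (h : EuclideanSpace ℂ (Fin 5 → Fin d)) :
    eveM31 d (postF d h) = postF d (diagP (EveBranch d) h) := by
  ext q
  obtain ⟨x, a, c, v, e⟩ := q
  rw [eveM31, diagP_apply, postF_apply, postF_apply, diagP_apply]
  by_cases hF : ancF (a, c, v, e) = 0
  · simp [hF]
  have he₁ := fst_eq_of_ancF_ne_zero hF 0
  have he₂ := fst_eq_of_ancF_ne_zero hF 1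
  simp only [EveBranch] at he₁ he₂ ⊢
  split_ifs <;> grind

theorem stateOf_three_eq_zero_of_not_eveBranch {d a p : ℕ} (hp : p ≠ 0)
    {x : Fin 5 → Fin d} (hx : ¬ EveBranch d x) : stateOf d 3 a p x = 0 := by
  simp only [EveBranch, not_and_or, not_not] at hx
  rcases hx with hx | hx | hx <;> simp [stateOf, tp5, ketD, ofFun, hx, Ne.symm hp]

theorem stateOf_eq_zero_of_eveBranch {d a p : ℕ} (hp : p ≠ 0) {k : Fin 10} (hk : k ≠ 3)
    {x : Fin 5 → Fin d} (hx : EveBranch d x) : stateOf d k a p x = 0 := by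
  obtain ⟨hA, hB, hE⟩ := hx
  fin_cases k <;> simp_all [stateOf, tp5, ketD, gammaD, ofFun, Ne.symm hp]

theorem thm10_step2_eve_isolates_H4_general (d : ℕ) :
    (∀ a p, validIdx d 3 a p →
      eveM31 d (postF d (stateOf d 3 a p)) = postF d (stateOf d 3 a p)) ∧
    (∀ k : Fin 10, k ≠ 3 → ∀ a p, validIdx d k a p →
      eveM31 d (postF d (stateOf d k a p)) = 0) := by
  constructor
  · rintro a p ⟨-, hp, -⟩
    rw [eveM31_postF, diagP_eq_self fun x hx =>
      stateOf_three_eq_zero_of_not_eveBranch (Nat.one_le_iff_ne_zero.mp hp) hx]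
  · rintro k hk a p ⟨-, hp, -⟩
    rw [eveM31_postF, diagP_eq_zero fun x hx =>
      stateOf_eq_zero_of_eveBranch (Nat.one_le_iff_ne_zero.mp hp) hk hx, postF_zero]

/-- Step 2 of Theorem 10: `M₃,₁` acts as the identity on every
post-measurement state arising from a state of `H₄`, and annihilates every
post-measurement state arising from a state of any other subset `H_k`, `k ≠ 4`. -/
theorem thm10_step2_eve_isolates_H4 (d : ℕ) (hd : 3 ≤ d) :
    (∀ a p, validIdx d 3 a p →
      eveM31 d (postF d (stateOf d 3 a p)) = postF d (stateOf d 3 a p)) ∧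
    (∀ k : Fin 10, k ≠ 3 → ∀ a p, validIdx d k a p →
      eveM31 d (postF d (stateOf d k a p)) = 0) :=
  thm10_step2_eve_isolates_H4_general d
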